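/- Let G be a finite simple graph on N ≥ 2 vertices in which every vertex has positive degree. Then the maximal volume-biased discrepancy is bounded by the second largest normalized eigenvalue in absolute value: ∂̃ ≤ λ. -/

import Mathlib

/-!
Let `s = D^{1/2} 1` and `V = vol [N]`. Then `φ = s / √V` is a unit eigenvector of `B` with
eigenvalue `1`, and every eigenvalue of `B` is at most `1` because `xᵀ B x ≤ xᵀ x` (AM-GM on each
edge). For `x = D^{1/2} 1_A`, `y = D^{1/2} 1_B` we have `xᵀ B y = e(A,B)`, `⟪φ, x⟫ = vol A / √V`
and `‖x‖² = vol A`. Projecting out `φ`, `x' = x - ⟪φ, x⟫ φ` satisfies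
`x'ᵀ B y' = e(A,B) - vol A vol B / V`, and every eigenvector of `B` not orthogonal to `x'` has
eigenvalue of absolute value at most `λ`: if the top eigenvalue is simple its eigenvector is a
multiple of `φ`, and otherwise `λ ≥ λ₂ = 1` bounds the whole spectrum. Expanding in the eigenbasis
and using Cauchy-Schwarz gives `|e(A,B) - vol A vol B / V| ≤ λ √(vol A vol B) ≤ λ V`.
-/

open Finset

noncomputable section

/-- Degree of vertex `i`. -/
def deg (N : ℕ) (a : Fin N → Fin N → ℝ) (i : Fin N) : ℝ := ∑ j, a i j

/-- Number of edges between `A` and `B` (ordered pairs). -/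
def eCount (N : ℕ) (a : Fin N → Fin N → ℝ) (A B : Finset (Fin N)) : ℝ :=
  ∑ i ∈ A, ∑ j ∈ B, a i j

/-- Volume of a set of vertices. -/
def vol (N : ℕ) (a : Fin N → Fin N → ℝ) (A : Finset (Fin N)) : ℝ :=
  ∑ i ∈ A, deg N a i

/-- Volume-biased discrepancy `δ̃(A,B)`. -/
def discVol (N : ℕ) (a : Fin N → Fin N → ℝ) (A B : Finset (Fin N)) : ℝ :=
  eCount N a A B / vol N a Finset.univ -
    (vol N a A / vol N a Finset.univ) * (vol N a B / vol N a Finset.univ)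

/-- `∂̃ = max_{A,B} |δ̃(A,B)|`. -/
def maxDiscVol (N : ℕ) (a : Fin N → Fin N → ℝ) : ℝ :=
  Finset.univ.sup' Finset.univ_nonempty
    (fun p : Finset (Fin N) × Finset (Fin N) => |discVol N a p.1 p.2|)

open Matrix

section Projection

variable {ι : Type*} [Fintype ι] {φ : ι → ℝ}

theorem dotProduct_sub_smul_eq_zero (hφ : φ ⬝ᵥ φ = 1) (x : ι → ℝ) :
    φ ⬝ᵥ (x - (φ ⬝ᵥ x) • φ) = 0 := by
  rw [dotProduct_sub, dotProduct_smul, hφ, smul_eq_mul, mul_one, sub_self]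

theorem dotProduct_self_sub_smul_le (hφ : φ ⬝ᵥ φ = 1) (x : ι → ℝ) :
    (x - (φ ⬝ᵥ x) • φ) ⬝ᵥ (x - (φ ⬝ᵥ x) • φ) ≤ x ⬝ᵥ x := by
  have h : (x - (φ ⬝ᵥ x) • φ) ⬝ᵥ (x - (φ ⬝ᵥ x) • φ) = x ⬝ᵥ x - (φ ⬝ᵥ x) ^ 2 := by
    simp only [sub_dotProduct, dotProduct_sub, smul_dotProduct, dotProduct_smul, hφ,
      dotProduct_comm x φ, smul_eq_mul]
    ring
  exact h ▸ sub_le_self _ (sq_nonneg _)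

end Projection

theorem abs_le_max_of_antitone {N : ℕ} (hN : 1 < N) {ev : Fin N → ℝ} (hmono : Antitone ev)
    {j : Fin N} (hj : j ≠ ⟨0, by omega⟩) :
    |ev j| ≤ max (ev ⟨1, hN⟩) (-(ev ⟨N - 1, by omega⟩)) := by
  have h1 : ev j ≤ ev ⟨1, hN⟩ := hmono (by simpa [Fin.le_def, Fin.ext_iff,
    Nat.one_le_iff_ne_zero] using hj)
  have h2 : ev ⟨N - 1, by omega⟩ ≤ ev j := hmono (by simp only [Fin.le_def]; omega)
  exact abs_le.2 ⟨by linarith [le_max_right (ev ⟨1, hN⟩) (-(ev ⟨N - 1, by omega⟩))],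
    h1.trans (le_max_left _ _)⟩

theorem max_nonneg_of_antitone {N : ℕ} (hN : 1 < N) {ev : Fin N → ℝ} (hmono : Antitone ev) :
    0 ≤ max (ev ⟨1, hN⟩) (-(ev ⟨N - 1, by omega⟩)) :=
  (abs_nonneg _).trans (abs_le_max_of_antitone hN hmono (j := ⟨1, hN⟩) (by simp))

namespace Matrix.IsHermitian

section

variable {ι : Type*} [Fintype ι] {A : Matrix ι ι ℝ}

theorem dotProduct_mulVec_comm (hA : A.IsHermitian) (x y : ι → ℝ) :
    x ⬝ᵥ (A *ᵥ y) = y ⬝ᵥ (A *ᵥ x) := by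
  rw [dotProduct_mulVec, ← mulVec_transpose, (isHermitian_iff_isSymm.1 hA).eq, dotProduct_comm]

theorem sub_smul_dotProduct_mulVec_sub_smul (hA : A.IsHermitian) {μ : ℝ} {φ : ι → ℝ}
    (hφ1 : φ ⬝ᵥ φ = 1) (hφ : A *ᵥ φ = μ • φ) (x y : ι → ℝ) :
    (x - (φ ⬝ᵥ x) • φ) ⬝ᵥ (A *ᵥ (y - (φ ⬝ᵥ y) • φ)) =
      x ⬝ᵥ (A *ᵥ y) - μ * ((φ ⬝ᵥ x) * (φ ⬝ᵥ y)) := by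
  simp only [mulVec_sub, mulVec_smul, sub_dotProduct, dotProduct_sub, smul_dotProduct,
    dotProduct_smul, hA.dotProduct_mulVec_comm φ y, hφ, hφ1, dotProduct_comm x φ,
    dotProduct_comm y φ, smul_eq_mul]
  ring

variable [DecidableEq ι] (hA : A.IsHermitian)

theorem eigenvectorBasis_dotProduct_self (k : ι) :
    (hA.eigenvectorBasis k).ofLp ⬝ᵥ (hA.eigenvectorBasis k).ofLp = 1 := by
  have h := real_inner_self_eq_norm_sq (hA.eigenvectorBasis k)
  rw [hA.eigenvectorBasis.orthonormal.norm_eq_one,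
    EuclideanSpace.inner_eq_star_dotProduct] at h
  simpa using h

theorem sum_eigenvectorBasis_dotProduct_mul (x y : ι → ℝ) :
    ∑ k, ((hA.eigenvectorBasis k).ofLp ⬝ᵥ x) * ((hA.eigenvectorBasis k).ofLp ⬝ᵥ y) =
      x ⬝ᵥ y := by
  simpa [EuclideanSpace.inner_eq_star_dotProduct, dotProduct_comm] using
    hA.eigenvectorBasis.sum_inner_mul_inner (WithLp.toLp 2 x) (WithLp.toLp 2 y)

theorem eigenvectorBasis_dotProduct_mulVec (k : ι) (y : ι → ℝ) :
    (hA.eigenvectorBasis k).ofLp ⬝ᵥ (A *ᵥ y) =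
      hA.eigenvalues k * ((hA.eigenvectorBasis k).ofLp ⬝ᵥ y) := by
  rw [hA.dotProduct_mulVec_comm, hA.mulVec_eigenvectorBasis, dotProduct_smul, smul_eq_mul,
    dotProduct_comm]

theorem dotProduct_mulVec_eq_sum_eigenvalues (x y : ι → ℝ) :
    x ⬝ᵥ (A *ᵥ y) = ∑ k, hA.eigenvalues k *
      (((hA.eigenvectorBasis k).ofLp ⬝ᵥ x) * ((hA.eigenvectorBasis k).ofLp ⬝ᵥ y)) := by
  rw [← hA.sum_eigenvectorBasis_dotProduct_mul]
  refine Finset.sum_congr rfl fun k _ => ?_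
  rw [hA.eigenvectorBasis_dotProduct_mulVec]
  ring

theorem eigenvalues_le_of_forall_dotProduct_mulVec_le {c : ℝ}
    (h : ∀ x, x ⬝ᵥ (A *ᵥ x) ≤ c * (x ⬝ᵥ x)) (k : ι) : hA.eigenvalues k ≤ c := by
  have hk := h (hA.eigenvectorBasis k).ofLp
  rw [hA.eigenvectorBasis_dotProduct_self, mul_one] at hk
  simpa [hA.eigenvalues_eq k] using hk

theorem eigenvectorBasis_dotProduct_eq_zero {μ : ℝ} {φ : ι → ℝ} (hφ : A *ᵥ φ = μ • φ) {k : ι}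
    (hk : hA.eigenvalues k ≠ μ) : (hA.eigenvectorBasis k).ofLp ⬝ᵥ φ = 0 := by
  have h := hA.eigenvectorBasis_dotProduct_mulVec k φ
  rw [hφ, dotProduct_smul, smul_eq_mul] at h
  exact (mul_eq_zero.1 (by linear_combination h)).resolve_left (sub_ne_zero.2 hk.symm)

theorem abs_dotProduct_mulVec_le {c : ℝ} (hc : 0 ≤ c) {x : ι → ℝ} (y : ι → ℝ)
    (h : ∀ k, |hA.eigenvalues k| ≤ c ∨ (hA.eigenvectorBasis k).ofLp ⬝ᵥ x = 0) :
    |x ⬝ᵥ (A *ᵥ y)| ≤ c * (√(x ⬝ᵥ x) * √(y ⬝ᵥ y)) := by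
  set p : ι → ℝ := fun k => (hA.eigenvectorBasis k).ofLp ⬝ᵥ x
  set q : ι → ℝ := fun k => (hA.eigenvectorBasis k).ofLp ⬝ᵥ y
  have hterm : ∀ k, |hA.eigenvalues k * (p k * q k)| ≤ c * (|p k| * |q k|) := by
    intro k
    rw [abs_mul, abs_mul]
    rcases h k with hk | hk
    · exact mul_le_mul_of_nonneg_right hk (by positivity)
    · simp [p, hk]
  calc |x ⬝ᵥ (A *ᵥ y)| ≤ ∑ k, c * (|p k| * |q k|) := by
        rw [hA.dotProduct_mulVec_eq_sum_eigenvalues]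
        exact (Finset.abs_sum_le_sum_abs _ _).trans (Finset.sum_le_sum fun k _ => hterm k)
    _ ≤ c * (√(∑ k, |p k| ^ 2) * √(∑ k, |q k| ^ 2)) := by
        rw [← Finset.mul_sum]
        exact mul_le_mul_of_nonneg_left (Real.sum_mul_le_sqrt_mul_sqrt _ _ _) hc
    _ = c * (√(x ⬝ᵥ x) * √(y ⬝ᵥ y)) := by
        simp only [sq_abs]
        simp only [sq, p, q, hA.sum_eigenvectorBasis_dotProduct_mul]

end

theorem abs_eigenvalues_le_or_eigenvectorBasis_dotProduct_eq_zero {N : ℕ} (hN : 1 < N)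
    {A : Matrix (Fin N) (Fin N) ℝ} (hA : A.IsHermitian) {ev : Fin N → ℝ}
    {σ : Equiv.Perm (Fin N)} (hev : ev = hA.eigenvalues ∘ σ) (hmono : Antitone ev)
    {μ : ℝ} {φ : Fin N → ℝ} (hφ0 : φ ≠ 0) (hφ : A *ᵥ φ = μ • φ)
    (hμ : ∀ k, hA.eigenvalues k ≤ μ) {x : Fin N → ℝ} (hx : φ ⬝ᵥ x = 0) (k : Fin N) :
    |hA.eigenvalues k| ≤ max (ev ⟨1, hN⟩) (-(ev ⟨N - 1, by omega⟩)) ∨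
      (hA.eigenvectorBasis k).ofLp ⬝ᵥ x = 0 := by
  have hν : ∀ j, hA.eigenvalues j = ev (σ.symm j) := by simp [hev]
  by_cases hk : σ.symm k = ⟨0, by omega⟩
  swap
  · exact .inl (hν k ▸ abs_le_max_of_antitone hN hmono hk)
  rcases (hmono (by simp [Fin.le_def]) : ev ⟨1, hN⟩ ≤ ev ⟨0, by omega⟩).eq_or_lt with heq | hlt
  · left
    rw [hν k, hk, ← heq]
    exact abs_le_max_of_antitone hN hmono (by simp)
  right
  -- the top eigenvalue is simple, so `φ` is a multiple of the `k`-th eigenvector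
  have hφj : ∀ j ≠ k, (hA.eigenvectorBasis j).ofLp ⬝ᵥ φ = 0 := by
    intro j hj
    refine hA.eigenvectorBasis_dotProduct_eq_zero hφ (ne_of_lt ?_)
    have hj0 : σ.symm j ≠ ⟨0, by omega⟩ := hk ▸ σ.symm.injective.ne hj
    have hj1 : ev (σ.symm j) ≤ ev ⟨1, hN⟩ :=
      hmono (by simpa [Fin.le_def, Fin.ext_iff, Nat.one_le_iff_ne_zero] using hj0)
    calc hA.eigenvalues j = ev (σ.symm j) := hν j
      _ < ev ⟨0, by omega⟩ := hj1.trans_lt hlt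
      _ = hA.eigenvalues k := by rw [hν k, hk]
      _ ≤ μ := hμ k
  have hφ_dot : ∀ z, φ ⬝ᵥ z = ((hA.eigenvectorBasis k).ofLp ⬝ᵥ φ) *
      ((hA.eigenvectorBasis k).ofLp ⬝ᵥ z) := by
    intro z
    rw [← hA.sum_eigenvectorBasis_dotProduct_mul, Finset.sum_eq_single k
      (fun j _ hj => by rw [hφj j hj, zero_mul]) (by simp)]
  have hk0 : (hA.eigenvectorBasis k).ofLp ⬝ᵥ φ ≠ 0 := by
    intro h0
    exact hφ0 (dotProduct_self_eq_zero.1 (by rw [hφ_dot, h0, zero_mul]))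
  exact (mul_eq_zero.1 ((hφ_dot x).symm.trans hx)).resolve_left hk0

theorem abs_dotProduct_mulVec_sub_le {N : ℕ} (hN : 1 < N)
    {A : Matrix (Fin N) (Fin N) ℝ} (hA : A.IsHermitian) {ev : Fin N → ℝ}
    {σ : Equiv.Perm (Fin N)} (hev : ev = hA.eigenvalues ∘ σ) (hmono : Antitone ev)
    {μ : ℝ} {φ : Fin N → ℝ} (hφ1 : φ ⬝ᵥ φ = 1) (hφ : A *ᵥ φ = μ • φ)
    (hμ : ∀ k, hA.eigenvalues k ≤ μ) (x y : Fin N → ℝ) :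
    |x ⬝ᵥ (A *ᵥ y) - μ * ((φ ⬝ᵥ x) * (φ ⬝ᵥ y))| ≤
      max (ev ⟨1, hN⟩) (-(ev ⟨N - 1, by omega⟩)) * (√(x ⬝ᵥ x) * √(y ⬝ᵥ y)) := by
  have hφ0 : φ ≠ 0 := by rintro rfl; simp at hφ1
  have hlam := max_nonneg_of_antitone hN hmono
  rw [← hA.sub_smul_dotProduct_mulVec_sub_smul hφ1 hφ]
  calc _ ≤ max (ev ⟨1, hN⟩) (-(ev ⟨N - 1, by omega⟩)) *
        (√((x - (φ ⬝ᵥ x) • φ) ⬝ᵥ (x - (φ ⬝ᵥ x) • φ)) *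
          √((y - (φ ⬝ᵥ y) • φ) ⬝ᵥ (y - (φ ⬝ᵥ y) • φ))) :=
        hA.abs_dotProduct_mulVec_le hlam _ fun k =>
          abs_eigenvalues_le_or_eigenvectorBasis_dotProduct_eq_zero hN hA hev hmono hφ0 hφ hμ
            (dotProduct_sub_smul_eq_zero hφ1 x) k
    _ ≤ _ := by
        gcongr
        · exact dotProduct_self_sub_smul_le hφ1 x
        · exact dotProduct_self_sub_smul_le hφ1 y

end Matrix.IsHermitian

section NormalizedAdjacency

variable {N : ℕ} {a : Fin N → Fin N → ℝ}

def sqrtDegIndicator (N : ℕ) (a : Fin N → Fin N → ℝ) (S : Finset (Fin N)) : Fin N → ℝ :=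
  fun i => if i ∈ S then √(deg N a i) else 0

theorem vol_le_vol_univ (hdeg : ∀ i, 0 ≤ deg N a i) (S : Finset (Fin N)) :
    vol N a S ≤ vol N a univ :=
  Finset.sum_le_sum_of_subset_of_nonneg (subset_univ S) fun i _ _ => hdeg i

theorem sqrtDegIndicator_dotProduct (hdeg : ∀ i, 0 ≤ deg N a i) (S T : Finset (Fin N)) :
    sqrtDegIndicator N a S ⬝ᵥ sqrtDegIndicator N a T = vol N a (S ∩ T) := by
  simp [dotProduct, sqrtDegIndicator, vol, ite_mul, mul_ite, Real.mul_self_sqrt, hdeg,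
    Finset.sum_ite_mem, inter_comm]

theorem sqrtDegIndicator_dotProduct_mulVec (hdeg : ∀ i, 0 < deg N a i)
    {B : Matrix (Fin N) (Fin N) ℝ} (hB : ∀ i j, B i j = a i j / (√(deg N a i) * √(deg N a j)))
    (S T : Finset (Fin N)) :
    sqrtDegIndicator N a S ⬝ᵥ (B *ᵥ sqrtDegIndicator N a T) = eCount N a S T := by
  simp only [dotProduct, mulVec, sqrtDegIndicator, ite_mul, zero_mul, mul_ite, mul_zero,
    Finset.sum_ite_mem, univ_inter]
  simp only [Finset.mul_sum, eCount]
  have hs : ∀ i, √(deg N a i) ≠ 0 := fun i => (Real.sqrt_pos.2 (hdeg i)).ne'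
  refine sum_congr rfl fun i _ => sum_congr rfl fun j _ => ?_
  rw [hB]
  field_simp [hs i, hs j]

theorem mulVec_sqrtDegIndicator_univ (hdeg : ∀ i, 0 < deg N a i)
    {B : Matrix (Fin N) (Fin N) ℝ} (hB : ∀ i j, B i j = a i j / (√(deg N a i) * √(deg N a j))) :
    B *ᵥ sqrtDegIndicator N a univ = sqrtDegIndicator N a univ := by
  ext i
  have hs : ∀ j, √(deg N a j) ≠ 0 := fun j => (Real.sqrt_pos.2 (hdeg j)).ne'
  calc (B *ᵥ sqrtDegIndicator N a univ) i = ∑ j, a i j / √(deg N a i) := by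
        simp only [mulVec, dotProduct, sqrtDegIndicator, mem_univ, if_true, hB]
        refine sum_congr rfl fun j _ => ?_
        field_simp [hs i, hs j]
    _ = sqrtDegIndicator N a univ i := by
        rw [← Finset.sum_div, sqrtDegIndicator, if_pos (mem_univ i), ← deg, Real.div_sqrt]

theorem sum_mul_mul_le_sum_deg_mul_sq (ha0 : ∀ i j, 0 ≤ a i j) (hsymm : ∀ i j, a i j = a j i)
    (w : Fin N → ℝ) : ∑ i, ∑ j, a i j * (w i * w j) ≤ ∑ i, deg N a i * w i ^ 2 := by
  have hterm : ∀ i j, a i j * (w i * w j) ≤ (a i j * w i ^ 2 + a j i * w j ^ 2) / 2 := by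
    intro i j
    rw [← hsymm i j]
    nlinarith [mul_nonneg (ha0 i j) (sq_nonneg (w i - w j))]
  calc ∑ i, ∑ j, a i j * (w i * w j)
      ≤ ∑ i, ∑ j, (a i j * w i ^ 2 + a j i * w j ^ 2) / 2 :=
        sum_le_sum fun i _ => sum_le_sum fun j _ => hterm i j
    _ = ∑ i, deg N a i * w i ^ 2 := by
        simp only [← Finset.sum_div, Finset.sum_add_distrib]
        rw [Finset.sum_comm (f := fun i j => a j i * w j ^ 2)]
        simp only [deg, Finset.sum_mul]
        ring

theorem dotProduct_mulVec_le_dotProduct_self (ha0 : ∀ i j, 0 ≤ a i j)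
    (hsymm : ∀ i j, a i j = a j i) (hdeg : ∀ i, 0 < deg N a i)
    {B : Matrix (Fin N) (Fin N) ℝ} (hB : ∀ i j, B i j = a i j / (√(deg N a i) * √(deg N a j)))
    (x : Fin N → ℝ) : x ⬝ᵥ (B *ᵥ x) ≤ x ⬝ᵥ x := by
  have hs : ∀ i, √(deg N a i) ≠ 0 := fun i => (Real.sqrt_pos.2 (hdeg i)).ne'
  have hquad : x ⬝ᵥ (B *ᵥ x) =
      ∑ i, ∑ j, a i j * (x i / √(deg N a i) * (x j / √(deg N a j))) := by
    simp only [dotProduct, mulVec, Finset.mul_sum, hB]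
    refine sum_congr rfl fun i _ => sum_congr rfl fun j _ => ?_
    field_simp [hs i, hs j]
  have hnorm : x ⬝ᵥ x = ∑ i, deg N a i * (x i / √(deg N a i)) ^ 2 := by
    simp only [dotProduct, div_pow, Real.sq_sqrt (hdeg _).le]
    refine sum_congr rfl fun i _ => ?_
    field_simp [(hdeg i).ne']
  rw [hquad, hnorm]
  exact sum_mul_mul_le_sum_deg_mul_sq ha0 hsymm _

theorem abs_discVol_le {c : ℝ} (hc : 0 ≤ c) (hdeg : ∀ i, 0 ≤ deg N a i)
    (hV : 0 < vol N a univ) {S T : Finset (Fin N)}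
    (h : |eCount N a S T - vol N a S * vol N a T / vol N a univ| ≤
      c * (√(vol N a S) * √(vol N a T))) :
    |discVol N a S T| ≤ c := by
  have hdisc : discVol N a S T =
      (eCount N a S T - vol N a S * vol N a T / vol N a univ) / vol N a univ := by
    rw [discVol]
    field_simp
  have hsqrt : √(vol N a S) * √(vol N a T) ≤ vol N a univ := by
    calc √(vol N a S) * √(vol N a T) ≤ √(vol N a univ) * √(vol N a univ) := by
          gcongr <;> exact vol_le_vol_univ hdeg _
      _ = vol N a univ := Real.mul_self_sqrt hV.le
  rw [hdisc, abs_div, abs_of_pos hV, div_le_iff₀ hV]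
  exact h.trans (mul_le_mul_of_nonneg_left hsqrt hc)

end NormalizedAdjacency

/-- The maximal volume-biased discrepancy is bounded by the second largest
(in absolute value) eigenvalue of the normalized adjacency matrix: `∂̃ ≤ λ`. -/
theorem stmt_10 (N : ℕ) (hN : 2 ≤ N) (a : Fin N → Fin N → ℝ)
    (hsymm : ∀ i j, a i j = a j i)
    (h01 : ∀ i j, a i j = 0 ∨ a i j = 1)
    (hdeg : ∀ i, 0 < deg N a i)
    (Bmat : Matrix (Fin N) (Fin N) ℝ)
    (hBmat : ∀ i j, Bmat i j = a i j / (Real.sqrt (deg N a i) * Real.sqrt (deg N a j)))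
    (hHerm : Bmat.IsHermitian)
    (ev : Fin N → ℝ) (σ : Equiv.Perm (Fin N))
    (hev : ev = hHerm.eigenvalues ∘ σ) (hmono : Antitone ev)
    (lam : ℝ) (hlam : lam = max (ev ⟨1, by omega⟩) (-(ev ⟨N - 1, by omega⟩))) :
    maxDiscVol N a ≤ lam := by
  have ha0 : ∀ i j, 0 ≤ a i j := fun i j => by rcases h01 i j with h | h <;> simp [h]
  have hdeg0 : ∀ i, 0 ≤ deg N a i := fun i => (hdeg i).le
  set V := vol N a univ
  have hV : 0 < V := sum_pos (fun i _ => hdeg i) ⟨⟨0, by omega⟩, mem_univ _⟩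
  set φ := (√V)⁻¹ • sqrtDegIndicator N a univ
  have hφ_dot : ∀ S, φ ⬝ᵥ sqrtDegIndicator N a S = (√V)⁻¹ * vol N a S := by
    intro S
    rw [smul_dotProduct, sqrtDegIndicator_dotProduct hdeg0, univ_inter, smul_eq_mul]
  have hφ1 : φ ⬝ᵥ φ = 1 := by
    rw [dotProduct_smul, hφ_dot, smul_eq_mul, ← mul_assoc, ← mul_inv, Real.mul_self_sqrt hV.le,
      inv_mul_cancel₀ hV.ne']
  have hBφ : Bmat *ᵥ φ = (1 : ℝ) • φ := by
    rw [one_smul, mulVec_smul, mulVec_sqrtDegIndicator_univ hdeg hBmat]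
  have hν : ∀ k, hHerm.eigenvalues k ≤ 1 :=
    hHerm.eigenvalues_le_of_forall_dotProduct_mulVec_le fun x => by
      simpa using dotProduct_mulVec_le_dotProduct_self ha0 hsymm hdeg hBmat x
  refine sup'_le _ _ fun ⟨S, T⟩ _ => ?_
  have hmix := hHerm.abs_dotProduct_mulVec_sub_le hN hev hmono hφ1 hBφ hν
    (sqrtDegIndicator N a S) (sqrtDegIndicator N a T)
  simp only [← hlam, hφ_dot, sqrtDegIndicator_dotProduct_mulVec hdeg hBmat,
    sqrtDegIndicator_dotProduct hdeg0, inter_self] at hmix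
  refine abs_discVol_le (hlam ▸ max_nonneg_of_antitone hN hmono) hdeg0 hV (hmix.trans_eq' ?_)
  rw [one_mul, mul_mul_mul_comm, ← mul_inv, Real.mul_self_sqrt hV.le, div_eq_inv_mul]
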